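/- Under the standing assumptions, suppose additionally that dom h = ℝⁿ (so C = ℝⁿ) and that φ is level bounded. Let γ ∈ (0, 1/L_f), let (xᵏ) ⊆ ℝⁿ and x̄ᵏ ∈ T_γ(xᵏ) with D_h(x̄ᵏ, xᵏ) → 0, and suppose φ_γ(xᵏ) converges to a finite value φ⋆ with φ(x̄ᵏ) → φ⋆. Then for every subsequence with x^{k_j} → x⋆, also x̄^{k_j} → x⋆, the limit point satisfies the fixed-point inclusion x⋆ ∈ T_γ(x⋆), and φ(x⋆) = φ⋆. -/

import Mathlib

open Filter Topology Set Bornology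
open scoped RealInnerProductSpace

noncomputable section

/-- `ℝⁿ` as a Euclidean space. -/
abbrev Rn (n : ℕ) := EuclideanSpace ℝ (Fin n)

variable {n : ℕ}

/-- Effective domain of an extended-real-valued function. -/
def edom (h : Rn n → EReal) : Set (Rn n) := {x | h x < ⊤}

/-- Properness: finite somewhere, never `⊥`. -/
def ERealProper (h : Rn n → EReal) : Prop := (∃ x, h x < ⊤) ∧ ∀ x, h x ≠ ⊥

/-- Convexity on a set for extended-real-valued functions. -/
def ERealConvexOn (s : Set (Rn n)) (h : Rn n → EReal) : Prop :=
  ∀ ⦃x⦄, x ∈ s → ∀ ⦃y⦄, y ∈ s → ∀ ⦃a b : ℝ⦄, 0 ≤ a → 0 ≤ b → a + b = 1 →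
    h (a • x + b • y) ≤ (a : EReal) * h x + (b : EReal) * h y

/-- Strict convexity on a set for extended-real-valued functions. -/
def ERealStrictConvexOn (s : Set (Rn n)) (h : Rn n → EReal) : Prop :=
  ∀ ⦃x⦄, x ∈ s → ∀ ⦃y⦄, y ∈ s → x ≠ y → ∀ ⦃a b : ℝ⦄, 0 < a → 0 < b → a + b = 1 →
    h (a • x + b • y) < (a : EReal) * h x + (b : EReal) * h y

/-- Strong convexity with modulus `σ` on a set, for extended-real-valued functions. -/
def ERealStrongConvexOn (s : Set (Rn n)) (σ : ℝ) (h : Rn n → EReal) : Prop :=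
  ∀ ⦃x⦄, x ∈ s → ∀ ⦃y⦄, y ∈ s → ∀ ⦃a b : ℝ⦄, 0 ≤ a → 0 ≤ b → a + b = 1 →
    h (a • x + b • y) + ((σ / 2 * (a * b) * ‖x - y‖ ^ 2 : ℝ) : EReal)
      ≤ (a : EReal) * h x + (b : EReal) * h y

/-- A Legendre kernel `h`, together with (a choice of) its gradient mapping `h'` on the
interior of its domain: proper, lsc, convex, 1-coercive, continuously differentiable and
strictly convex on the (nonempty) interior of its domain, and essentially smooth. -/
structure LegendreKernel (h : Rn n → EReal) (h' : Rn n → Rn n) : Prop where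
  proper : ERealProper h
  lsc : LowerSemicontinuous h
  convex : ERealConvexOn Set.univ h
  nonemptyInterior : (interior (edom h)).Nonempty
  coercive : ∀ M : ℝ, ∃ R : ℝ, ∀ x : Rn n, R ≤ ‖x‖ → ((M * ‖x‖ : ℝ) : EReal) ≤ h x
  differentiable : ∀ x ∈ interior (edom h), HasGradientAt (fun y => (h y).toReal) (h' x) x
  gradContinuous : ContinuousOn h' (interior (edom h))
  strictConvexOn : ERealStrictConvexOn (interior (edom h)) h
  essentiallySmooth : ∀ x ∈ frontier (edom h), ∀ u : ℕ → Rn n,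
    (∀ k, u k ∈ interior (edom h)) → Tendsto u atTop (𝓝 x) →
    Tendsto (fun k => ‖h' (u k)‖) atTop atTop

open scoped Classical in
/-- Bregman distance `D_h(z, x)`, equal to `⊤` when `x ∉ int dom h`. -/
def Dbreg (h : Rn n → EReal) (h' : Rn n → Rn n) (z x : Rn n) : EReal :=
  if x ∈ interior (edom h) then h z - h x - ((⟪h' x, z - x⟫ : ℝ) : EReal) else ⊤

/-- Objective function of the Bregman proximal subproblem. -/
def bregObj (h : Rn n → EReal) (h' : Rn n → Rn n) (φ : Rn n → EReal) (γ : ℝ)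
    (x z : Rn n) : EReal :=
  φ z + ((1 / γ : ℝ) : EReal) * Dbreg h h' z x

/-- Bregman–Moreau envelope `φ^{h/γ}`. -/
def bregEnv (h : Rn n → EReal) (h' : Rn n → Rn n) (φ : Rn n → EReal) (γ : ℝ)
    (x : Rn n) : EReal :=
  ⨅ z, bregObj h h' φ γ x z

/-- Bregman proximal mapping `prox_{γ φ}^h` (set of minimizers of the prox subproblem). -/
def bregProx (h : Rn n → EReal) (h' : Rn n → Rn n) (φ : Rn n → EReal) (γ : ℝ)
    (x : Rn n) : Set (Rn n) :=
  {z | ∀ w, bregObj h h' φ γ x z ≤ bregObj h h' φ γ x w}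

/-- `γ` lies strictly below the prox-boundedness threshold `γ_φ^h`. -/
def BelowThreshold (h : Rn n → EReal) (h' : Rn n → Rn n) (φ : Rn n → EReal) (γ : ℝ) : Prop :=
  0 < γ ∧ ∃ γ' : ℝ, γ < γ' ∧ ∃ x, bregEnv h h' φ γ' x ≠ ⊥

/-- `φ` is `h`-prox-bounded: the threshold `γ_φ^h` is positive. -/
def ProxBounded (h : Rn n → EReal) (h' : Rn n → Rn n) (φ : Rn n → EReal) : Prop :=
  ∃ γ : ℝ, 0 < γ ∧ ∃ x, bregEnv h h' φ γ x ≠ ⊥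

/-- `f` is `Lf`-smooth relative to the kernel `h`:  `f` is proper, lsc,
`dom f ⊇ dom h`, and `Lf·h ± f` are convex on `int dom h`. -/
def RelSmooth (h f : Rn n → EReal) (Lf : ℝ) : Prop :=
  ERealProper f ∧ LowerSemicontinuous f ∧ edom h ⊆ edom f ∧
  ERealConvexOn (interior (edom h)) (fun x => (Lf : EReal) * h x + f x) ∧
  ERealConvexOn (interior (edom h)) (fun x => (Lf : EReal) * h x - f x)

/-- Objective function of the Bregman forward-backward subproblem. -/
def fbObj (h : Rn n → EReal) (h' : Rn n → Rn n) (f : Rn n → EReal) (f' : Rn n → Rn n)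
    (g : Rn n → EReal) (γ : ℝ) (x z : Rn n) : EReal :=
  f x + ((⟪f' x, z - x⟫ : ℝ) : EReal) + g z + ((1 / γ : ℝ) : EReal) * Dbreg h h' z x

/-- Bregman forward-backward mapping `T_γ`. -/
def fbT (h : Rn n → EReal) (h' : Rn n → Rn n) (f : Rn n → EReal) (f' : Rn n → Rn n)
    (g : Rn n → EReal) (γ : ℝ) (x : Rn n) : Set (Rn n) :=
  {z | ∀ w, fbObj h h' f f' g γ x z ≤ fbObj h h' f f' g γ x w}

/-- Bregman forward-backward envelope `φ_γ`. -/
def fbEnv (h : Rn n → EReal) (h' : Rn n → Rn n) (f : Rn n → EReal) (f' : Rn n → Rn n)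
    (g : Rn n → EReal) (γ : ℝ) (x : Rn n) : EReal :=
  ⨅ z, fbObj h h' f f' g γ x z

end

/-! With `dom h = ℝⁿ` all the data are real-valued, and `f'` is continuous because `Lf h - f` is
convex and differentiable and gradients of differentiable convex functions on `ℝⁿ` are
continuous. Level boundedness keeps the `x̄ᵏ` in a compact set, and every limit `a` of a
subsequence of `x̄^{k_j}` satisfies `D_h(a, x⋆) = 0`, so `a = x⋆` by strict convexity of `h`.
Lower semicontinuity of `φ` then gives `φ(x⋆) ≤ φ⋆`, while `φ_γ`, an infimum of functions that
are continuous in `x`, is upper semicontinuous, so `φ⋆ ≤ φ_γ(x⋆) ≤ φ(x⋆)`. Equality throughout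
says that `x⋆` minimizes the forward-backward subproblem at `x⋆`. -/

theorem tendsto_of_isBounded_of_forall_subseq_tendsto {X : Type*} [PseudoMetricSpace X]
    [ProperSpace X] {s : Set X} {u : ℕ → X} {b : X} (hs : IsBounded s)
    (hu : ∀ᶠ k in atTop, u k ∈ s)
    (huniq : ∀ ψ : ℕ → ℕ, StrictMono ψ → ∀ a, Tendsto (u ∘ ψ) atTop (𝓝 a) → a = b) :
    Tendsto u atTop (𝓝 b) :=
  hs.isCompact_closure.tendsto_nhds_of_unique_mapClusterPt
    (hu.mono fun _ hk => subset_closure hk) fun a _ ha => by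
      obtain ⟨ψ, hψ, hlim⟩ := ha.tendsto_subseq
      exact huniq ψ hψ a hlim

section ConvexGradient

variable {E : Type*} [NormedAddCommGroup E] [InnerProductSpace ℝ E] [CompleteSpace E]
  {G : E → ℝ} {s : Set E} {x y p q : E}

theorem ConvexOn.add_inner_le_of_hasGradientAt (hG : ConvexOn ℝ s G) (hx : x ∈ s) (hy : y ∈ s)
    (hq : HasGradientAt G q x) : G x + ⟪q, y - x⟫ ≤ G y := by
  let ℓ : ℝ →ᵃ[ℝ] E := AffineMap.lineMap x y
  have hderiv : HasDerivAt (G ∘ ℓ) ⟪q, y - x⟫ 0 := by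
    have := hq.hasFDerivAt
    rw [← AffineMap.lineMap_apply_zero x y (k := ℝ)] at this
    exact this.comp_hasDerivAt 0 AffineMap.hasDerivAt_lineMap
  have hslope := (hG.comp_affineMap ℓ).le_slope_of_hasDerivAt (x := 0) (y := 1)
    (by simpa [ℓ] using hx) (by simpa [ℓ] using hy) one_pos hderiv
  simp only [slope, sub_zero, inv_one, Function.comp_apply, AffineMap.lineMap_apply_one,
    AffineMap.lineMap_apply_zero, vsub_eq_sub, smul_eq_mul, one_mul, ℓ] at hslope
  linarith

theorem StrictConvexOn.add_inner_lt_of_hasGradientAt (hG : StrictConvexOn ℝ s G) (hx : x ∈ s)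
    (hy : y ∈ s) (hxy : x ≠ y) (hq : HasGradientAt G q x) : G x + ⟪q, y - x⟫ < G y := by
  set m : E := (1 / 2 : ℝ) • x + (1 / 2 : ℝ) • y
  have hm : m ∈ s := hG.1 hx hy (by norm_num) (by norm_num) (by norm_num)
  have hmid : G m < 1 / 2 * G x + 1 / 2 * G y :=
    hG.2 hx hy hxy (by norm_num) (by norm_num) (by norm_num)
  have hgrad := hG.convexOn.add_inner_le_of_hasGradientAt hx hm hq
  have hmx : m - x = (1 / 2 : ℝ) • (y - x) := by
    simp only [m, smul_sub]; module
  rw [hmx, real_inner_smul_right] at hgrad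
  linarith

theorem HasGradientAt.eq_of_forall_add_inner_le (hq : HasGradientAt G q x)
    (hp : ∀ y, G x + ⟪p, y - x⟫ ≤ G y) : p = q := by
  have hmin : IsLocalMin (fun y => G y - ⟪p, y⟫) x :=
    Filter.Eventually.of_forall fun y => by
      have := hp y
      rw [inner_sub_right] at this
      linarith
  have hderiv : HasFDerivAt (fun y => G y - ⟪p, y⟫)
      (InnerProductSpace.toDual ℝ E q - InnerProductSpace.toDual ℝ E p) x :=
    hq.hasFDerivAt.sub (InnerProductSpace.toDual ℝ E p).hasFDerivAt
  have := hmin.hasFDerivAt_eq_zero hderiv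
  rw [sub_eq_zero] at this
  exact ((InnerProductSpace.toDual ℝ E).injective this).symm

theorem ConvexOn.norm_le_of_hasGradientAt {M : ℝ} (hG : ConvexOn ℝ univ G)
    (hq : HasGradientAt G q x) (hM : ∀ y ∈ Metric.closedBall x 1, |G y| ≤ M) : ‖q‖ ≤ 2 * M := by
  set u : E := ‖q‖⁻¹ • q
  have hu : ‖u‖ ≤ 1 := by
    rcases eq_or_ne q 0 with rfl | hq0
    · simp [u]
    · exact (norm_smul_inv_norm hq0).le
  have hqu : ⟪q, u⟫ = ‖q‖ := by
    rw [real_inner_smul_right, real_inner_self_eq_norm_sq]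
    rcases eq_or_ne ‖q‖ 0 with h0 | h0
    · simp [h0]
    · field_simp
  have hgrad := hG.add_inner_le_of_hasGradientAt (mem_univ x) (mem_univ (x + u)) hq
  rw [add_sub_cancel_left, hqu] at hgrad
  have h1 := abs_le.mp (hM x (Metric.mem_closedBall_self zero_le_one))
  have h2 := abs_le.mp (hM (x + u) (by simpa using hu))
  linarith [h1.1, h2.2]

theorem ConvexOn.continuous_of_hasGradientAt [ProperSpace E] {G' : E → E}
    (hG : ConvexOn ℝ univ G) (hG' : ∀ x, HasGradientAt G (G' x) x) : Continuous G' := by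
  have hGc : Continuous G := continuous_iff_continuousAt.mpr fun x => (hG' x).continuousAt
  refine continuous_iff_seqContinuous.mpr fun z x hz => ?_
  obtain ⟨M, hM⟩ : ∃ M, ∀ y ∈ Metric.closedBall x 2, ‖G y‖ ≤ M :=
    (isCompact_closedBall x 2).exists_bound_of_continuousOn hGc.continuousOn
  have hbdd : ∀ᶠ k in atTop, G' (z k) ∈ Metric.closedBall 0 (2 * M) := by
    filter_upwards [hz (Metric.closedBall_mem_nhds x one_pos)] with k hk
    refine mem_closedBall_zero_iff.mpr (hG.norm_le_of_hasGradientAt (hG' _) fun y hy => hM y ?_)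
    exact Metric.closedBall_subset_closedBall' (by linarith [Metric.mem_closedBall.mp hk]) hy
  -- a subsequential limit of the gradients is a subgradient at `x`, hence equals `G' x`
  refine tendsto_of_isBounded_of_forall_subseq_tendsto Metric.isBounded_closedBall hbdd
    fun ψ hψ p hp => (hG' x).eq_of_forall_add_inner_le fun y => ?_
  have hzψ : Tendsto (z ∘ ψ) atTop (𝓝 x) := hz.comp hψ.tendsto_atTop
  refine le_of_tendsto' (x := atTop) ?_ fun k =>
    hG.add_inner_le_of_hasGradientAt (mem_univ _) (mem_univ y) (hG' (z (ψ k)))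
  exact (hGc.tendsto x |>.comp hzψ).add (hp.inner (tendsto_const_nhds.sub hzψ))

end ConvexGradient

section Bregman

variable {E : Type*} [NormedAddCommGroup E] [InnerProductSpace ℝ E] {H : E → ℝ} {H' : E → E}

def bregmanDist (H : E → ℝ) (H' : E → E) (z x : E) : ℝ := H z - H x - ⟪H' x, z - x⟫

@[simp]
theorem bregmanDist_self (x : E) : bregmanDist H H' x x = 0 := by simp [bregmanDist]

theorem bregmanDist_pos [CompleteSpace E] (hH : StrictConvexOn ℝ univ H) {z x : E}
    (hx : HasGradientAt H (H' x) x) (hzx : z ≠ x) : 0 < bregmanDist H H' z x := by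
  have := hH.add_inner_lt_of_hasGradientAt (mem_univ x) (mem_univ z) hzx.symm hx
  rw [bregmanDist]
  linarith

theorem Filter.Tendsto.bregmanDist {ι : Type*} {l : Filter ι} {z x : ι → E} {z₀ x₀ : E}
    (hH : Continuous H) (hH' : Continuous H') (hz : Tendsto z l (𝓝 z₀))
    (hx : Tendsto x l (𝓝 x₀)) :
    Tendsto (fun i => _root_.bregmanDist H H' (z i) (x i)) l
      (𝓝 (_root_.bregmanDist H H' z₀ x₀)) :=
  (((hH.tendsto z₀).comp hz).sub ((hH.tendsto x₀).comp hx)).sub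
    (((hH'.tendsto x₀).comp hx).inner (hz.sub hx))

theorem tendsto_of_tendsto_bregmanDist_zero [ProperSpace E]
    (hH : StrictConvexOn ℝ univ H) (hH'grad : ∀ x, HasGradientAt H (H' x) x)
    (hH' : Continuous H') {s : Set E} {u v : ℕ → E} {x : E} (hs : IsBounded s)
    (hu : ∀ᶠ k in atTop, u k ∈ s) (hv : Tendsto v atTop (𝓝 x))
    (hD : Tendsto (fun k => bregmanDist H H' (u k) (v k)) atTop (𝓝 0)) :
    Tendsto u atTop (𝓝 x) := by
  have hHc : Continuous H := continuous_iff_continuousAt.mpr fun x => (hH'grad x).continuousAt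
  refine tendsto_of_isBounded_of_forall_subseq_tendsto hs hu fun ψ hψ a ha => ?_
  by_contra hax
  have hlim := ha.bregmanDist hHc hH' (hv.comp hψ.tendsto_atTop)
  have hzero := tendsto_nhds_unique hlim (hD.comp hψ.tendsto_atTop)
  exact (bregmanDist_pos hH (hH'grad x) hax).ne' hzero

end Bregman

theorem LowerSemicontinuous.le_of_tendsto {α β ι : Type*} [TopologicalSpace α] [LinearOrder β]
    [DenselyOrdered β] [TopologicalSpace β] [OrderClosedTopology β] {φ : α → β}
    (hφ : LowerSemicontinuous φ) {l : Filter ι} [l.NeBot] {u : ι → α} {a : α} {b : β}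
    (hu : Tendsto u l (𝓝 a)) (hb : Tendsto (fun i => φ (u i)) l (𝓝 b)) : φ a ≤ b :=
  le_of_forall_lt_imp_le_of_dense fun _ hc =>
    ge_of_tendsto hb ((hu.eventually (hφ a _ hc)).mono fun _ => le_of_lt)

theorem UpperSemicontinuous.le_of_tendsto {α β ι : Type*} [TopologicalSpace α] [LinearOrder β]
    [DenselyOrdered β] [TopologicalSpace β] [OrderClosedTopology β] {φ : α → β}
    (hφ : UpperSemicontinuous φ) {l : Filter ι} [l.NeBot] {u : ι → α} {a : α} {b : β}
    (hu : Tendsto u l (𝓝 a)) (hb : Tendsto (fun i => φ (u i)) l (𝓝 b)) : b ≤ φ a :=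
  LowerSemicontinuous.le_of_tendsto (β := βᵒᵈ) hφ hu hb

theorem EReal.continuousAt_coe_add {α : Type*} [TopologicalSpace α] {R : α → ℝ} {c : α → EReal}
    {x : α} (hR : ContinuousAt R x) (hc : ContinuousAt c x) :
    ContinuousAt (fun y => (R y : EReal) + c y) x :=
  (EReal.continuousAt_add (.inl (EReal.coe_ne_top _)) (.inl (EReal.coe_ne_bot _))).comp
    ((continuous_coe_real_ereal.continuousAt.comp hR).prodMk hc)

section Problem

variable {n : ℕ} {h f g : Rn n → EReal} {h' f' : Rn n → Rn n} {Lf γ : ℝ}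

theorem ERealConvexOn.convexOn {s : Set (Rn n)} {φ : Rn n → EReal} {Φ : Rn n → ℝ}
    (hs : Convex ℝ s) (hφ : ERealConvexOn s φ) (hΦ : ∀ x, φ x = Φ x) : ConvexOn ℝ s Φ :=
  ⟨hs, fun x hx y hy a b ha hb hab => by
    have := hφ hx hy ha hb hab
    rw [hΦ, hΦ, hΦ] at this
    exact_mod_cast this⟩

theorem ERealStrictConvexOn.strictConvexOn {s : Set (Rn n)} {φ : Rn n → EReal}
    {Φ : Rn n → ℝ} (hs : Convex ℝ s) (hφ : ERealStrictConvexOn s φ) (hΦ : ∀ x, φ x = Φ x) :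
    StrictConvexOn ℝ s Φ :=
  ⟨hs, fun x hx y hy hxy a b ha hb hab => by
    have := hφ hx hy hxy ha hb hab
    rw [hΦ, hΦ, hΦ] at this
    exact_mod_cast this⟩

theorem ERealProper.eq_coe_toReal {φ : Rn n → EReal} (hφ : ERealProper φ)
    (hdom : edom φ = univ) (x : Rn n) : φ x = (φ x).toReal :=
  (EReal.coe_toReal (hdom ▸ mem_univ x : x ∈ edom φ).ne (hφ.2 x)).symm

theorem RelSmooth.edom_eq_univ (hRel : RelSmooth h f Lf) (hdom : edom h = univ) :
    edom f = univ :=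
  eq_univ_of_univ_subset (hdom ▸ hRel.2.2.1)

theorem LegendreKernel.strictConvexOn_toReal (hLeg : LegendreKernel h h') (hdom : edom h = univ) :
    StrictConvexOn ℝ univ fun x => (h x).toReal := by
  have hconv := hLeg.strictConvexOn
  rw [hdom, interior_univ] at hconv
  exact hconv.strictConvexOn convex_univ (hLeg.proper.eq_coe_toReal hdom)

theorem LegendreKernel.continuous_grad (hLeg : LegendreKernel h h') (hdom : edom h = univ) :
    Continuous h' := by
  have hcont := hLeg.gradContinuous
  rwa [hdom, interior_univ, continuousOn_univ] at hcont

theorem RelSmooth.continuous_grad (hLeg : LegendreKernel h h') (hRel : RelSmooth h f Lf)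
    (hdom : edom h = univ)
    (hf' : ∀ x ∈ interior (edom h), HasGradientAt (fun y => (f y).toReal) (f' x) x) :
    Continuous f' := by
  set H : Rn n → ℝ := fun x => (h x).toReal
  set F : Rn n → ℝ := fun x => (f x).toReal
  have hH := hLeg.proper.eq_coe_toReal hdom
  have hF := hRel.1.eq_coe_toReal (hRel.edom_eq_univ hdom)
  have hconv := hRel.2.2.2.2
  rw [hdom, interior_univ] at hconv
  have hGconv : ConvexOn ℝ univ fun x => Lf * H x - F x :=
    hconv.convexOn convex_univ fun x => by rw [hH x, hF x]; norm_cast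
  have hGgrad : ∀ x, HasGradientAt (fun y => Lf * H y - F y) (Lf • h' x - f' x) x := by
    intro x
    have hx : x ∈ interior (edom h) := by simp [hdom]
    have := ((hLeg.differentiable x hx).hasFDerivAt.const_mul Lf).sub (hf' x hx).hasFDerivAt
    rw [hasGradientAt_iff_hasFDerivAt, map_sub, map_smul]
    exact this
  have hGc := hGconv.continuous_of_hasGradientAt hGgrad
  exact (((hLeg.continuous_grad hdom).const_smul Lf).sub hGc).congr fun x => by simp

theorem Dbreg_eq_bregmanDist (hLeg : LegendreKernel h h') (hdom : edom h = univ) (z x : Rn n) :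
    Dbreg h h' z x = bregmanDist (fun y => (h y).toReal) h' z x := by
  have hH := hLeg.proper.eq_coe_toReal hdom
  rw [Dbreg, if_pos (by simp [hdom]), hH z, hH x, bregmanDist]
  norm_cast

theorem fbObj_eq_coe_add (hLeg : LegendreKernel h h') (hRel : RelSmooth h f Lf)
    (hdom : edom h = univ) (x z : Rn n) :
    fbObj h h' f f' g γ x z = (((f x).toReal + ⟪f' x, z - x⟫
      + 1 / γ * bregmanDist (fun y => (h y).toReal) h' z x : ℝ) : EReal) + g z := by
  rw [fbObj, Dbreg_eq_bregmanDist hLeg hdom, hRel.1.eq_coe_toReal (hRel.edom_eq_univ hdom) x,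
    add_right_comm _ (g z)]
  norm_cast

theorem fbObj_self (hLeg : LegendreKernel h h') (hRel : RelSmooth h f Lf)
    (hdom : edom h = univ) (x : Rn n) : fbObj h h' f f' g γ x x = f x + g x := by
  rw [fbObj_eq_coe_add hLeg hRel hdom, hRel.1.eq_coe_toReal (hRel.edom_eq_univ hdom) x]
  simp

theorem upperSemicontinuous_fbEnv (hLeg : LegendreKernel h h') (hRel : RelSmooth h f Lf)
    (hdom : edom h = univ)
    (hf' : ∀ x ∈ interior (edom h), HasGradientAt (fun y => (f y).toReal) (f' x) x) :
    UpperSemicontinuous (fbEnv h h' f f' g γ) := by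
  have hint : ∀ x, x ∈ interior (edom h) := by simp [hdom]
  have hHc : Continuous fun x => (h x).toReal :=
    continuous_iff_continuousAt.mpr fun x => (hLeg.differentiable x (hint x)).continuousAt
  have hFc : Continuous fun x => (f x).toReal :=
    continuous_iff_continuousAt.mpr fun x => (hf' x (hint x)).continuousAt
  have hf'c := hRel.continuous_grad hLeg hdom hf'
  have hh'c := hLeg.continuous_grad hdom
  refine upperSemicontinuous_iInf fun w => Continuous.upperSemicontinuous ?_
  simp_rw [fbObj_eq_coe_add hLeg hRel hdom]
  refine continuous_iff_continuousAt.mpr fun x => EReal.continuousAt_coe_add ?_ continuousAt_const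
  exact (hFc.add (hf'c.inner (continuous_const.sub continuous_id))).add
    (continuous_const.mul (continuous_iff_continuousAt.mpr fun x =>
      (tendsto_const_nhds.bregmanDist hHc hh'c (continuous_id.tendsto x)))) |>.continuousAt

theorem RelSmooth.lowerSemicontinuous_add (hRel : RelSmooth h f Lf) (hdom : edom h = univ)
    (hglsc : LowerSemicontinuous g) : LowerSemicontinuous fun x => f x + g x :=
  hRel.2.1.add' hglsc fun x => EReal.continuousAt_add
    (.inl (hRel.edom_eq_univ hdom ▸ mem_univ x : x ∈ edom f).ne) (.inl (hRel.1.2 x))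

end Problem

theorem stmt18_subsequential_convergence_general
    {n : ℕ} (h : Rn n → EReal) (h' : Rn n → Rn n) (f : Rn n → EReal) (f' : Rn n → Rn n)
    (g : Rn n → EReal) (Lf γ : ℝ)
    (hLeg : LegendreKernel h h') (hRel : RelSmooth h f Lf)
    (hf' : ∀ x ∈ interior (edom h), HasGradientAt (fun y => (f y).toReal) (f' x) x)
    (hglsc : LowerSemicontinuous g)
    (hfull : edom h = Set.univ)
    (hlb : ∀ α : ℝ, IsBounded {y | f y + g y ≤ (α : EReal)})
    (x xb : ℕ → Rn n)
    (hD : Tendsto (fun k => Dbreg h h' (xb k) (x k)) atTop (𝓝 (0 : EReal)))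
    (φs : ℝ)
    (henv : Tendsto (fun k => fbEnv h h' f f' g γ (x k)) atTop (𝓝 ((φs : ℝ) : EReal)))
    (hφb : Tendsto (fun k => f (xb k) + g (xb k)) atTop (𝓝 ((φs : ℝ) : EReal))) :
    ∀ κ : ℕ → ℕ, StrictMono κ → ∀ xs : Rn n,
      Tendsto (fun j => x (κ j)) atTop (𝓝 xs) →
      Tendsto (fun j => xb (κ j)) atTop (𝓝 xs)
      ∧ xs ∈ fbT h h' f f' g γ xs
      ∧ f xs + g xs = ((φs : ℝ) : EReal) := by
  intro κ hκ xs hxs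
  have hκ' := hκ.tendsto_atTop
  have hDreal : Tendsto (fun k => bregmanDist (fun y => (h y).toReal) h' (xb k) (x k)) atTop
      (𝓝 0) := by
    simp only [Dbreg_eq_bregmanDist hLeg hfull] at hD
    exact EReal.tendsto_coe.mp hD
  have hxbs : Tendsto (fun j => xb (κ j)) atTop (𝓝 xs) :=
    tendsto_of_tendsto_bregmanDist_zero (hLeg.strictConvexOn_toReal hfull)
      (fun y => hLeg.differentiable y (by simp [hfull])) (hLeg.continuous_grad hfull)
      (hlb (φs + 1)) ((hφb.comp hκ').eventually_le_const (by exact_mod_cast lt_add_one φs))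
      hxs (hDreal.comp hκ')
  have hφ_le : f xs + g xs ≤ φs :=
    (hRel.lowerSemicontinuous_add hfull hglsc).le_of_tendsto hxbs (hφb.comp hκ')
  have hφs_le : (φs : EReal) ≤ fbEnv h h' f f' g γ xs :=
    (upperSemicontinuous_fbEnv hLeg hRel hfull hf').le_of_tendsto hxs (henv.comp hκ')
  have hmin : ∀ w, fbObj h h' f f' g γ xs xs ≤ fbObj h h' f f' g γ xs w := fun w =>
    calc fbObj h h' f f' g γ xs xs = f xs + g xs := fbObj_self hLeg hRel hfull xs
      _ ≤ fbEnv h h' f f' g γ xs := hφ_le.trans hφs_le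
      _ ≤ fbObj h h' f f' g γ xs w := iInf_le _ w
  refine ⟨hxbs, hmin, le_antisymm hφ_le (hφs_le.trans ?_)⟩
  exact (iInf_le _ xs).trans (fbObj_self hLeg hRel hfull xs).le

theorem stmt18_subsequential_convergence
    {n : ℕ} (h : Rn n → EReal) (h' : Rn n → Rn n) (f : Rn n → EReal) (f' : Rn n → Rn n)
    (g : Rn n → EReal) (Lf γ : ℝ)
    (hLeg : LegendreKernel h h') (hLf : 0 ≤ Lf) (hRel : RelSmooth h f Lf)
    (hf' : ∀ x ∈ interior (edom h), HasGradientAt (fun y => (f y).toReal) (f' x) x)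
    (hg : ERealProper g) (hglsc : LowerSemicontinuous g)
    (hmin : ∃ xm ∈ closure (interior (edom h)),
      ∀ y ∈ closure (interior (edom h)), f xm + g xm ≤ f y + g y)
    (hfull : edom h = Set.univ)
    (hlb : ∀ α : ℝ, IsBounded {y | f y + g y ≤ (α : EReal)})
    (hγ : 0 < γ) (hγL : γ * Lf < 1)
    (hrange : ∀ x ∈ interior (edom h), fbT h h' f f' g γ x ⊆ interior (edom h))
    (x xb : ℕ → Rn n)
    (hxb : ∀ k, xb k ∈ fbT h h' f f' g γ (x k))
    (hD : Tendsto (fun k => Dbreg h h' (xb k) (x k)) atTop (𝓝 (0 : EReal)))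
    (φs : ℝ)
    (henv : Tendsto (fun k => fbEnv h h' f f' g γ (x k)) atTop (𝓝 ((φs : ℝ) : EReal)))
    (hφb : Tendsto (fun k => f (xb k) + g (xb k)) atTop (𝓝 ((φs : ℝ) : EReal))) :
    ∀ κ : ℕ → ℕ, StrictMono κ → ∀ xs : Rn n,
      Tendsto (fun j => x (κ j)) atTop (𝓝 xs) →
      Tendsto (fun j => xb (κ j)) atTop (𝓝 xs)
      ∧ xs ∈ fbT h h' f f' g γ xs
      ∧ f xs + g xs = ((φs : ℝ) : EReal) :=
  stmt18_subsequential_convergence_general h h' f f' g Lf γ hLeg hRel hf' hglsc hfull hlb x xb hD φs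
    henv hφb
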